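/- arXiv:1904.02400 — 4 statements merged into one kernel-verified Lean document; each statement's English description precedes it below -/
import Mathlib

section
/- The Riedtmann–Peng formula: for objects L, M, N in a finitary abelian category A over a finite field, the number g^L_{MN} of subobjects N' of L with N' ≅ N and L/N' ≅ M equals (|Ext^1_A(M,N)_L| / |Hom_A(M,N)|) · (a_L / (a_M · a_N)), where Ext^1_A(M,N)_L denotes the set of equivalence classes of extensions of M by N with middle term isomorphic to L, and a_X = |Aut(X)|. -/
/-!
Let `W` be the set of pairs `(f, g)` forming a short exact sequence `0 → N → L → M → 0`, and count
it in two ways. The group `Aut L` acts on `W` with orbit set `Ext¹(M, N)_L`, and the stabilizer of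
`(f, g)` is `{1 + g h f | h : M ⟶ N}`, in bijection with `Hom(M, N)`; hence
`|W| · |Hom(M, N)| = |Ext¹(M, N)_L| · a_L`. The group `Aut M × Aut N` acts freely on `W`, and its
orbits correspond to the subobjects `f(N) ⊆ L` counted by `g^L_{MN}` (a cokernel is unique up to a
unique isomorphism); hence `|W| = g^L_{MN} · a_M · a_N`.
-/

open CategoryTheory CategoryTheory.Limits

noncomputable section
universe v u
variable {C : Type u} [Category.{v} C] [Abelian C]

def IsSES {N L M : C} (f : N ⟶ L) (g : L ⟶ M) : Prop :=
  ∃ w : f ≫ g = 0, (CategoryTheory.ShortComplex.mk f g w).ShortExact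

def ExtW (M N L : C) : Type _ := {p : (N ⟶ L) × (L ⟶ M) // IsSES p.1 p.2}

def extRel (M N L : C) (p q : ExtW M N L) : Prop :=
  ∃ θ : L ≅ L, p.1.1 ≫ θ.hom = q.1.1 ∧ θ.hom ≫ q.1.2 = p.1.2

def ExtClasses (M N L : C) := Quot (extRel M N L)

/-- `g^L_{MN}`: the number of subobjects `N' ⊆ L` with `N' ≅ N` and `L/N' ≅ M`. -/
def gNum (M N L : C) : ℕ :=
  Nat.card {S : Subobject L // Nonempty ((S : C) ≅ N) ∧ Nonempty (cokernel S.arrow ≅ M)}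

open MulAction

theorem MulAction.card_mul_eq_card_orbitRel_mul_card {G X : Type*} [Group G] [MulAction G X]
    [Finite G] [Finite X] {n : ℕ} (hn : ∀ x : X, Nat.card (stabilizer G x) = n) :
    Nat.card X * n = Nat.card (Quotient (orbitRel G X)) * Nat.card G := by
  classical
  have : Fintype (Quotient (orbitRel G X)) := Fintype.ofFinite _
  have horbit (ω : Quotient (orbitRel G X)) :
      Nat.card (G ⧸ stabilizer G ω.out) * n = Nat.card G := by
    rw [← hn ω.out, ← Subgroup.card_eq_card_quotient_mul_card_subgroup]
  rw [Nat.card_congr (selfEquivSigmaOrbitsQuotientStabilizer G X), Nat.card_sigma,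
    Finset.sum_mul, Finset.sum_congr rfl fun ω _ => horbit ω, Finset.sum_const, smul_eq_mul,
    Finset.card_univ, ← Nat.card_eq_fintype_card]

instance CategoryTheory.Iso.finite {D : Type*} [Category D] (X Y : D) [Finite (X ⟶ Y)]
    [Finite (Y ⟶ X)] : Finite (X ≅ Y) :=
  Finite.of_injective (fun i => (i.hom, i.inv)) fun _ _ h => Iso.ext (Prod.ext_iff.1 h).1

instance CategoryTheory.Aut.finite {D : Type*} [Category D] (X : D) [Finite (X ⟶ X)] :
    Finite (Aut X) :=
  Iso.finite X X

def CategoryTheory.Preadditive.autOneAdd {D : Type*} [Category D] [Preadditive D] {X : D}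
    (φ : X ⟶ X) (hφ : φ ≫ φ = 0) : Aut X where
  hom := 𝟙 X + φ
  inv := 𝟙 X - φ
  hom_inv_id := by simp [hφ]
  inv_hom_id := by simp [hφ]

def CategoryTheory.ShortComplex.Exact.homEquivEnd {S : ShortComplex C} (hS : S.Exact) [Mono S.f]
    [Epi S.g] : (S.X₃ ⟶ S.X₁) ≃ {φ : S.X₂ ⟶ S.X₂ // S.f ≫ φ = 0 ∧ φ ≫ S.g = 0} where
  toFun h := ⟨S.g ≫ h ≫ S.f, by simp, by simp⟩
  invFun φ := hS.lift (hS.desc φ.1 φ.2.1) (by rw [← cancel_epi S.g, hS.g_desc_assoc, φ.2.2]; simp)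
  left_inv h := by
    rw [← cancel_mono S.f, ← cancel_epi S.g]
    simp
  right_inv φ := by
    ext
    simp

namespace IsSES

variable {N L M : C} {f : N ⟶ L} {g : L ⟶ M}

lemma zero (h : IsSES f g) : f ≫ g = 0 := h.fst

lemma shortExact (h : IsSES f g) : (ShortComplex.mk f g h.zero).ShortExact := h.snd

lemma mono (h : IsSES f g) : Mono f := h.shortExact.mono_f

lemma epi (h : IsSES f g) : Epi g := h.shortExact.epi_g

lemma of_mono (f : N ⟶ L) [Mono f] : IsSES f (cokernel.π f) :=
  ⟨cokernel.condition f, ShortComplex.ShortExact.mk'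
    (ShortComplex.exact_of_g_is_cokernel _ (cokernelIsCokernel f)) inferInstance inferInstance⟩

lemma iso {N' L' M' : C} (h : IsSES f g) (β : N' ≅ N) (θ : L ≅ L') (α : M ≅ M') :
    IsSES (β.hom ≫ f ≫ θ.hom) (θ.inv ≫ g ≫ α.hom) :=
  ⟨by simp [reassoc_of% h.zero], ShortComplex.shortExact_of_iso
    (ShortComplex.isoMk β.symm θ α (by simp) (by simp)) h.shortExact⟩

def cokernelIso (h : IsSES f g) : cokernel f ≅ M :=
  IsColimit.coconePointUniqueUpToIso (cokernelIsCokernel f) h.shortExact.gIsCokernel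

lemma exists_iso_comp_eq {M' : C} {g' : L ⟶ M'} (h : IsSES f g) (h' : IsSES f g') :
    ∃ α : M ≅ M', g ≫ α.hom = g' :=
  ⟨IsColimit.coconePointUniqueUpToIso h.shortExact.gIsCokernel h'.shortExact.gIsCokernel,
    IsColimit.comp_coconePointUniqueUpToIso_hom h.shortExact.gIsCokernel h'.shortExact.gIsCokernel
      WalkingParallelPair.one⟩

end IsSES

abbrev SubobjectsOfType (M N L : C) : Type _ :=
  {S : Subobject L // Nonempty ((S : C) ≅ N) ∧ Nonempty (cokernel S.arrow ≅ M)}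

namespace ExtW

variable {M N L : C}

abbrev ι (p : ExtW M N L) : N ⟶ L := p.1.1

abbrev π (p : ExtW M N L) : L ⟶ M := p.1.2

lemma isSES (p : ExtW M N L) : IsSES p.ι p.π := p.2

instance (p : ExtW M N L) : Mono p.ι := p.isSES.mono

instance (p : ExtW M N L) : Epi p.π := p.isSES.epi

@[ext]
lemma ext {p q : ExtW M N L} (hι : p.ι = q.ι) (hπ : p.π = q.π) : p = q :=
  Subtype.ext (Prod.ext hι hπ)

instance [Finite (N ⟶ L)] [Finite (L ⟶ M)] : Finite (ExtW M N L) :=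
  inferInstanceAs (Finite {p : (N ⟶ L) × (L ⟶ M) // IsSES p.1 p.2})

instance : SMul (Aut L) (ExtW M N L) where
  smul θ p := ⟨(p.ι ≫ θ.hom, θ.inv ≫ p.π), by simpa using p.isSES.iso (Iso.refl N) θ (Iso.refl M)⟩

@[simp] lemma aut_smul_ι (θ : Aut L) (p : ExtW M N L) : (θ • p).ι = p.ι ≫ θ.hom := rfl

@[simp] lemma aut_smul_π (θ : Aut L) (p : ExtW M N L) : (θ • p).π = θ.inv ≫ p.π := rfl

instance : MulAction (Aut L) (ExtW M N L) where
  one_smul _ := ext (Category.comp_id _) (Category.id_comp _)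
  mul_smul _ _ _ := ext (Category.assoc _ _ _).symm (Category.assoc _ _ _)

lemma aut_smul_eq_iff (θ : Aut L) (p q : ExtW M N L) :
    θ • p = q ↔ p.ι ≫ θ.hom = q.ι ∧ θ.hom ≫ q.π = p.π := by
  constructor
  · rintro rfl
    simp [Iso.hom_inv_id_assoc (θ : L ≅ L)]
  · rintro ⟨hι, hπ⟩
    ext
    · simpa using hι
    · simp [← hπ, Iso.inv_hom_id_assoc (θ : L ≅ L)]

def extClassesEquivOrbits (M N L : C) :
    ExtClasses M N L ≃ Quotient (orbitRel (Aut L) (ExtW M N L)) :=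
  Quot.congrRight fun p q => by
    rw [orbitRel_apply, mem_orbit_symm, mem_orbit_iff]
    exact exists_congr fun θ => (aut_smul_eq_iff θ p q).symm

lemma autOneAdd_mem_stabilizer (p : ExtW M N L) {φ : L ⟶ L} (hφ : φ ≫ φ = 0)
    (hι : p.ι ≫ φ = 0) (hπ : φ ≫ p.π = 0) :
    Preadditive.autOneAdd φ hφ ∈ stabilizer (Aut L) p := by
  rw [mem_stabilizer_iff, aut_smul_eq_iff]
  simp [Preadditive.autOneAdd, hι, hπ]

def homEquivStabilizer (p : ExtW M N L) : (M ⟶ N) ≃ stabilizer (Aut L) p :=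
  let e := p.isSES.shortExact.exact.homEquivEnd
  { toFun h := ⟨Preadditive.autOneAdd (e h).1 (by
      change (p.π ≫ h ≫ p.ι) ≫ p.π ≫ h ≫ p.ι = 0
      simp [reassoc_of% p.isSES.zero]),
      autOneAdd_mem_stabilizer p _ (e h).2.1 (e h).2.2⟩
    invFun θ :=
      have hθ := (aut_smul_eq_iff θ.1 p p).1 (mem_stabilizer_iff.1 θ.2)
      e.symm ⟨θ.1.hom - 𝟙 L, by simp [hθ.1], by simp [hθ.2]⟩
    left_inv h := by
      rw [Equiv.symm_apply_eq]
      ext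
      simp [Preadditive.autOneAdd]
    right_inv θ := by
      ext
      simp [Preadditive.autOneAdd] }

instance : SMul (Aut M × Aut N) (ExtW M N L) where
  smul γ p := ⟨(γ.2.inv ≫ p.ι, p.π ≫ γ.1.hom), by
    have h := p.isSES.iso (γ.2 : N ≅ N).symm (Iso.refl L) γ.1
    simp only [Iso.refl_hom, Iso.refl_inv, Category.comp_id, Category.id_comp] at h
    exact h⟩

@[simp] lemma autProd_smul_ι (γ : Aut M × Aut N) (p : ExtW M N L) : (γ • p).ι = γ.2.inv ≫ p.ι :=
  rfl

@[simp] lemma autProd_smul_π (γ : Aut M × Aut N) (p : ExtW M N L) : (γ • p).π = p.π ≫ γ.1.hom :=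
  rfl

instance : MulAction (Aut M × Aut N) (ExtW M N L) where
  one_smul _ := ext (Category.id_comp _) (Category.comp_id _)
  mul_smul _ _ _ := ext (Category.assoc _ _ _) (Category.assoc _ _ _).symm

lemma stabilizer_autProd_eq_bot (p : ExtW M N L) : stabilizer (Aut M × Aut N) p = ⊥ := by
  refine (Subgroup.eq_bot_iff_forall _).2 fun γ hγ => ?_
  have hι : γ.2.inv ≫ p.ι = p.ι := congrArg ι (mem_stabilizer_iff.1 hγ)
  have hπ : p.π ≫ γ.1.hom = p.π := congrArg π (mem_stabilizer_iff.1 hγ)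
  refine Prod.ext (Aut.ext ?_) (Aut.ext ((Iso.inv_eq_inv (γ.2 : N ≅ N) (Iso.refl N)).1 ?_))
  · exact (cancel_epi p.π).1 (hπ.trans (Category.comp_id _).symm)
  · exact (cancel_mono p.ι).1 (hι.trans (Category.id_comp _).symm)

def toSubobject (p : ExtW M N L) : SubobjectsOfType M N L :=
  ⟨Subobject.mk p.ι, ⟨Subobject.underlyingIso p.ι⟩,
    ⟨(cokernelIsoOfEq (Subobject.underlyingIso_hom_comp_eq_mk p.ι).symm).trans
      ((cokernelEpiComp _ p.ι).trans p.isSES.cokernelIso)⟩⟩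

lemma toSubobject_eq_iff (p q : ExtW M N L) :
    p.toSubobject = q.toSubobject ↔ orbitRel (Aut M × Aut N) (ExtW M N L) p q := by
  rw [orbitRel_apply, mem_orbit_iff, Subtype.ext_iff]
  constructor
  · intro h
    let β := Subobject.isoOfMkEqMk p.ι q.ι h
    have hβ : β.hom ≫ q.ι = p.ι := Subobject.ofMkLEMk_comp h.le
    have hq : IsSES p.ι q.π := by simpa [hβ] using q.isSES.iso β (Iso.refl L) (Iso.refl M)
    obtain ⟨α, hα⟩ := hq.exists_iso_comp_eq p.isSES
    exact ⟨(α, β.symm), ext (by simpa using hβ) (by simpa using hα)⟩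
  · rintro ⟨γ, rfl⟩
    exact Subobject.mk_eq_mk_of_comm (γ • q).ι q.ι (γ.2 : N ≅ N).symm rfl

lemma toSubobject_surjective : Function.Surjective (toSubobject (M := M) (N := N) (L := L)) := by
  rintro ⟨S, ⟨e⟩, ⟨c⟩⟩
  have h := (IsSES.of_mono S.arrow).iso e.symm (Iso.refl L) c
  simp only [Iso.symm_hom, Iso.refl_hom, Iso.refl_inv, Category.comp_id, Category.id_comp] at h
  exact ⟨⟨(e.inv ≫ S.arrow, cokernel.π S.arrow ≫ c.hom), h⟩,
    Subtype.ext (Subobject.mk_eq_of_comm _ e.symm rfl)⟩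

def orbitsEquivSubobjectsOfType (M N L : C) :
    Quotient (orbitRel (Aut M × Aut N) (ExtW M N L)) ≃ SubobjectsOfType M N L :=
  (Quotient.congrRight fun p q => (toSubobject_eq_iff p q).symm.trans Setoid.ker_def.symm).trans
    (Setoid.quotientKerEquivOfSurjective _ toSubobject_surjective)

end ExtW

theorem card_extW_mul_card_hom [∀ X Y : C, Finite (X ⟶ Y)] (M N L : C) :
    Nat.card (ExtW M N L) * Nat.card (M ⟶ N) = Nat.card (ExtClasses M N L) * Nat.card (Aut L) := by
  rw [Nat.card_congr (ExtW.extClassesEquivOrbits M N L)]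
  exact card_mul_eq_card_orbitRel_mul_card fun p =>
    (Nat.card_congr (ExtW.homEquivStabilizer p)).symm

theorem card_extW_eq_gNum_mul (M N L : C) :
    Nat.card (ExtW M N L) = gNum M N L * (Nat.card (Aut M) * Nat.card (Aut N)) := by
  rw [Nat.card_congr (selfEquivOrbitsQuotientProd ExtW.stabilizer_autProd_eq_bot), Nat.card_prod,
    Nat.card_congr (ExtW.orbitsEquivSubobjectsOfType M N L), Nat.card_prod]
  rfl

/-- **Riedtmann–Peng formula.** -/
theorem riedtmann_peng [∀ X Y : C, Finite (X ⟶ Y)] (L M N : C) :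
    (gNum M N L : ℚ) =
      (Nat.card (ExtClasses M N L) : ℚ) / (Nat.card (M ⟶ N) : ℚ) *
        ((Nat.card (Aut L) : ℚ) / ((Nat.card (Aut M) : ℚ) * (Nat.card (Aut N) : ℚ))) := by
  have hExt := card_extW_mul_card_hom M N L
  have hSub := card_extW_eq_gNum_mul M N L
  have hHom : (Nat.card (M ⟶ N) : ℚ) ≠ 0 := Nat.cast_ne_zero.2 (@Nat.card_pos _ ⟨0⟩ _).ne'
  have hAutM : (Nat.card (Aut M) : ℚ) ≠ 0 := Nat.cast_ne_zero.2 (@Nat.card_pos _ ⟨1⟩ _).ne'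
  have hAutN : (Nat.card (Aut N) : ℚ) ≠ 0 := Nat.cast_ne_zero.2 (@Nat.card_pos _ ⟨1⟩ _).ne'
  rw [hSub] at hExt
  qify at hExt
  field_simp
  linear_combination hExt
end
end

section
/- Let A be a finitary abelian category with enough projectives, P its full subcategory of projectives, and m ≥ 2. In the Hall algebra H(C_m(P)) of m-cyclic complexes over P (with exactness defined component-wise), the subspace I spanned by the classes [M_∘] of m-cyclic complexes M_∘ = (M_i, d_i) with d_0 ≠ 0 is a two-sided ideal. -/
open CategoryTheory CategoryTheory.Limits
open scoped Classical

noncomputable section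

attribute [local instance] CategoryTheory.isIsomorphicSetoid

universe v u

variable {C : Type u} [Category.{v} C] [Abelian C]

/-- The Hall structure constant `|Ext¹(M,N)_L| / |Hom(M,N)|`. -/
def hallCoeff (M N L : C) : ℚ :=
  (Nat.card (ExtClasses M N L) : ℚ) / (Nat.card (M ⟶ N) : ℚ)

/-- Isomorphism classes of objects. -/
abbrev IsoCls (D : Type*) [Category D] := Quotient (isIsomorphicSetoid D)

variable (P : C → Prop)

/-- The full, extension-closed subcategory of objects satisfying `P`
(e.g. complexes of projectives). -/
abbrev SubCat := ObjectProperty.FullSubcategory P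

/-- Hall structure constants of the exact subcategory, computed by ambient
short exact sequences. -/
def hallCoeffP (M N L : SubCat P) : ℚ := hallCoeff M.obj N.obj L.obj

/-- The underlying vector space of the Hall algebra of the subcategory. -/
abbrev HallAlgP := IsoCls (SubCat P) →₀ ℚ

/-- Finiteness assumptions making the Hall multiplication well defined. -/
class HallFinitaryP : Prop where
  homFinite : ∀ X Y : SubCat P, Finite (X.obj ⟶ Y.obj)
  suppFinite : ∀ M N : SubCat P,
    {κ : IsoCls (SubCat P) | hallCoeffP P M N (Quotient.out κ) ≠ 0}.Finite

/-- The Hall product of two basis elements. -/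
def hallMulBasisP [HallFinitaryP P] (M N : SubCat P) : HallAlgP P :=
  ⟨(HallFinitaryP.suppFinite M N).toFinset,
    fun κ => hallCoeffP P M N (Quotient.out κ), by
      intro κ
      simp [Set.Finite.mem_toFinset]⟩

/-- The multiplication of the Hall algebra of the subcategory. -/
def hallMulP [HallFinitaryP P] (x y : HallAlgP P) : HallAlgP P :=
  x.sum fun κ a => y.sum fun κ' b => (a * b) • hallMulBasisP P κ.out κ'.out


/-- The category of `m`-cyclic complexes over `C`. -/
abbrev CyclicCx (m : ℕ) (C : Type u) [Category.{v} C] [Abelian C] :=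
  HomologicalComplex C (ComplexShape.up' (1 : ZMod m))

/-- The predicate singling out `m`-cyclic complexes of projectives. -/
abbrev cyclicProj (m : ℕ) (C : Type u) [Category.{v} C] [Abelian C] :
    CyclicCx m C → Prop :=
  fun X => ∀ i, Projective (X.X i)

/-! A short exact sequence of complexes `0 ⟶ N ⟶ L ⟶ M ⟶ 0` with `L.d 0 1 = 0` forces
`N.d 0 1 = 0` (as `f` is a monomorphism) and `M.d 0 1 = 0` (as `g` is an epimorphism). Hence
a Hall product `[M] ⋄ [N]` is a combination of classes `[L]` with `d₀ ≠ 0` as soon as one factor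
has `d₀ ≠ 0`, so the span of these classes absorbs products on both sides. -/

namespace IsSES

variable {ι : Type*} {c : ComplexShape ι} {N L M : HomologicalComplex C c}
  {f : N ⟶ L} {g : L ⟶ M}

lemma d_ne_zero_of_d_ne_zero_left (h : IsSES f g) {i j : ι} (hN : N.d i j ≠ 0) :
    L.d i j ≠ 0 := by
  obtain ⟨_, hse⟩ := h
  have := hse.mono_f
  intro hL
  apply hN
  rw [← cancel_mono (f.f j), ← f.comm, hL, comp_zero, zero_comp]

lemma d_ne_zero_of_d_ne_zero_right (h : IsSES f g) {i j : ι} (hM : M.d i j ≠ 0) :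
    L.d i j ≠ 0 := by
  obtain ⟨_, hse⟩ := h
  have := hse.epi_g
  intro hL
  apply hM
  rw [← cancel_epi (g.f i), g.comm, hL, zero_comp, comp_zero]

end IsSES

lemma hallCoeff_eq_zero_of_not_exists_isSES {M N L : C}
    (h : ¬ ∃ p : (N ⟶ L) × (L ⟶ M), IsSES p.1 p.2) : hallCoeff M N L = 0 := by
  have : IsEmpty (ExtW M N L) := ⟨fun p => h ⟨p.1, p.2⟩⟩
  simp [hallCoeff, ExtClasses, Nat.card_of_isEmpty]

section HallIdeal

variable [HallFinitaryP P]

lemma hallMulP_apply_eq_zero {x y : HallAlgP P} {κ : IsoCls (SubCat P)}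
    (h : ∀ μ ∈ x.support, ∀ ν ∈ y.support, hallCoeffP P μ.out ν.out κ.out = 0) :
    hallMulP P x y κ = 0 := by
  rw [hallMulP, Finsupp.sum_apply]
  refine Finset.sum_eq_zero fun μ hμ => ?_
  dsimp only
  rw [Finsupp.sum_apply]
  refine Finset.sum_eq_zero fun ν hν => ?_
  simp [hallMulBasisP, h μ hμ ν hν]

variable {P} (Q : SubCat P → Prop)

lemma hallMulP_mem_supported_left
    (hQ : ∀ {M N L : SubCat P} {f : N.obj ⟶ L.obj} {g : L.obj ⟶ M.obj},
      IsSES f g → Q M → Q L)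
    {x : HallAlgP P} (hx : x ∈ Finsupp.supported ℚ ℚ {κ | Q κ.out}) (y : HallAlgP P) :
    hallMulP P x y ∈ Finsupp.supported ℚ ℚ {κ | Q κ.out} := by
  refine (Finsupp.mem_supported' _ _).2 fun κ hκ => hallMulP_apply_eq_zero P fun μ hμ ν _ => ?_
  exact hallCoeff_eq_zero_of_not_exists_isSES fun ⟨p, hp⟩ => hκ (hQ hp (hx hμ))

lemma hallMulP_mem_supported_right
    (hQ : ∀ {M N L : SubCat P} {f : N.obj ⟶ L.obj} {g : L.obj ⟶ M.obj},
      IsSES f g → Q N → Q L)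
    {x : HallAlgP P} (hx : x ∈ Finsupp.supported ℚ ℚ {κ | Q κ.out}) (y : HallAlgP P) :
    hallMulP P y x ∈ Finsupp.supported ℚ ℚ {κ | Q κ.out} := by
  refine (Finsupp.mem_supported' _ _).2 fun κ hκ => hallMulP_apply_eq_zero P fun μ _ ν hν => ?_
  exact hallCoeff_eq_zero_of_not_exists_isSES fun ⟨p, hp⟩ => hκ (hQ hp (hx hν))

end HallIdeal

lemma span_single_one_eq_supported {α R : Type*} [Semiring R] (p : α → Prop) :
    Submodule.span R {v : α →₀ R | ∃ a, p a ∧ v = Finsupp.single a 1} =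
      Finsupp.supported R R {a | p a} := by
  rw [Finsupp.supported_eq_span_single]
  congr 1
  ext v
  simp [eq_comm]

theorem span_dzero_ne_zero_isIdeal_general (m : ℕ)
    [HallFinitaryP (cyclicProj m C)] :
    ∀ x ∈ Submodule.span ℚ
      {v : HallAlgP (cyclicProj m C) | ∃ κ : IsoCls (SubCat (cyclicProj m C)),
        (Quotient.out κ).obj.d 0 1 ≠ 0 ∧ v = Finsupp.single κ (1 : ℚ)},
      ∀ y : HallAlgP (cyclicProj m C),
        hallMulP _ x y ∈ Submodule.span ℚ
          {v : HallAlgP (cyclicProj m C) | ∃ κ : IsoCls (SubCat (cyclicProj m C)),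
            (Quotient.out κ).obj.d 0 1 ≠ 0 ∧ v = Finsupp.single κ (1 : ℚ)} ∧
        hallMulP _ y x ∈ Submodule.span ℚ
          {v : HallAlgP (cyclicProj m C) | ∃ κ : IsoCls (SubCat (cyclicProj m C)),
            (Quotient.out κ).obj.d 0 1 ≠ 0 ∧ v = Finsupp.single κ (1 : ℚ)} := by
  intro x hx y
  rw [span_single_one_eq_supported] at hx ⊢
  exact ⟨hallMulP_mem_supported_left (fun X => X.obj.d 0 1 ≠ 0)
      (fun h => h.d_ne_zero_of_d_ne_zero_right) hx y,
    hallMulP_mem_supported_right (fun X => X.obj.d 0 1 ≠ 0)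
      (fun h => h.d_ne_zero_of_d_ne_zero_left) hx y⟩

/-- **The subspace `I` spanned by classes of `m`-cyclic complexes of projectives with
`d₀ ≠ 0` is a two-sided ideal of the Hall algebra `H(C_m(P))`.** -/
theorem span_dzero_ne_zero_isIdeal (m : ℕ) (hm : 2 ≤ m)
    [HallFinitaryP (cyclicProj m C)] :
    ∀ x ∈ Submodule.span ℚ
      {v : HallAlgP (cyclicProj m C) | ∃ κ : IsoCls (SubCat (cyclicProj m C)),
        (Quotient.out κ).obj.d 0 1 ≠ 0 ∧ v = Finsupp.single κ (1 : ℚ)},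
      ∀ y : HallAlgP (cyclicProj m C),
        hallMulP _ x y ∈ Submodule.span ℚ
          {v : HallAlgP (cyclicProj m C) | ∃ κ : IsoCls (SubCat (cyclicProj m C)),
            (Quotient.out κ).obj.d 0 1 ≠ 0 ∧ v = Finsupp.single κ (1 : ℚ)} ∧
        hallMulP _ y x ∈ Submodule.span ℚ
          {v : HallAlgP (cyclicProj m C) | ∃ κ : IsoCls (SubCat (cyclicProj m C)),
            (Quotient.out κ).obj.d 0 1 ≠ 0 ∧ v = Finsupp.single κ (1 : ℚ)} :=
  span_dzero_ne_zero_isIdeal_general m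

end
end

section
/- Let A be a finitary hereditary abelian category with enough projectives and m ≥ 2. In C^m(P), for any objects M, N of A and 0 ≤ r < l < m−1, one has Ext^1_{C^m(P)}(T_M[r], T_N[l]) = 0. -/
open CategoryTheory CategoryTheory.Limits ZeroObject

noncomputable section
universe v u
variable {C : Type u} [Category.{v} C] [Abelian C]

variable (Pr : C → Prop)

/-- Representatives of `n`-extensions of `M` by `N` (`n ≥ 1`): exact sequences
`0 → N → E_1 → ⋯ → E_n → M → 0` whose middle terms satisfy the predicate `Pr`
(cutting out the exact subcategory). -/
def NExtRep (n : ℕ) (M N : C) : Type (max u v) :=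
  {S : ComposableArrows C (n + 1) //
    S.Exact ∧ Mono (S.map' 0 1 (by omega) (by omega)) ∧
    Epi (S.map' n (n + 1) (by omega) (by omega)) ∧
    S.obj' 0 (by omega) = N ∧ S.obj' (n + 1) (by omega) = M ∧
    ∀ (i : ℕ) (h1 : 1 ≤ i) (h2 : i ≤ n), Pr (S.obj' i (by omega))}

/-- A morphism of `n`-extensions restricting to the identity on both ends; the
equivalence closure of this relation is the Yoneda equivalence of extensions. -/
def nextRel (n : ℕ) (M N : C) (S T : NExtRep Pr n M N) : Prop :=
  ∃ φ : S.1 ⟶ T.1,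
    φ.app ⟨0, by omega⟩ =
      eqToHom (by
        obtain ⟨-, -, -, h, -⟩ := S.2
        obtain ⟨-, -, -, h', -⟩ := T.2
        rw [show S.1.obj ⟨0, by omega⟩ = N from h, show T.1.obj ⟨0, by omega⟩ = N from h']) ∧
    φ.app ⟨n + 1, by omega⟩ =
      eqToHom (by
        obtain ⟨-, -, -, -, h, -⟩ := S.2
        obtain ⟨-, -, -, -, h', -⟩ := T.2
        rw [show S.1.obj ⟨n + 1, by omega⟩ = M from h,
          show T.1.obj ⟨n + 1, by omega⟩ = M from h'])

/-- `Ext^n` (`n ≥ 1`) of the exact subcategory cut out by `Pr`, as Yoneda extension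
classes. -/
def ExtN (n : ℕ) (M N : C) := Quot (nextRel Pr n M N)

/-- Cardinalities `|Ext^n(M, N)|`, with `Ext^0 = Hom`. -/
def extCardP (n : ℕ) (M N : C) : ℕ :=
  match n with
  | 0 => Nat.card (M ⟶ N)
  | k + 1 => Nat.card (ExtN Pr (k + 1) M N)

/-- The Euler form `⟨M,N⟩ = Σᵢ (-1)ⁱ dim_{F_q} Extⁱ(M,N)`, where the dimension of a
finite `F_q`-vector space is recovered as `log_q` of its cardinality. -/
def eulerP (q : ℕ) (M N : C) : ℤ :=
  ∑ᶠ n : ℕ, (-1 : ℤ) ^ n * (Nat.log q (extCardP Pr n M N) : ℤ)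

/-- The two-term cochain complex with `Q` in degree `n`, `P` in degree `n + 1` and
differential `f`. -/
def twoTerm {Q P : C} (f : Q ⟶ P) (n : ℤ) : CochainComplex C ℤ where
  X i := if i = n then Q else if i = n + 1 then P else 0
  d i j :=
    if h : i = n ∧ j = n + 1 then
      eqToHom (show (if i = n then Q else if i = n + 1 then P else 0) = Q by
          rw [if_pos h.1]) ≫ f ≫
        eqToHom (show P = (if j = n then Q else if j = n + 1 then P else 0) by
          rw [if_neg (show ¬ j = n by omega), if_pos h.2])
    else 0
  shape i j hij := by
    try dsimp at hij ⊢
    rw [dif_neg]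
    rintro ⟨rfl, rfl⟩
    exact hij rfl
  d_comp_d' i j k hij hjk := by
    try dsimp at hij hjk ⊢
    by_cases h : i = n ∧ j = n + 1
    · rw [dif_neg (show ¬(j = n ∧ k = n + 1) by rintro ⟨h2, -⟩; omega), comp_zero]
    · rw [dif_neg h, zero_comp]


/-- `C` is hereditary: every subobject of a projective object is projective. -/
def Hereditary (C : Type u) [Category.{v} C] [Abelian C] : Prop :=
  ∀ (X Y : C) (f : X ⟶ Y), Mono f → Projective Y → Projective X

/-- `0 → Ω →^δ P →^π M → 0` is a minimal projective resolution of `M`. -/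
def IsMinProjRes {Ω P M : C} (δ : Ω ⟶ P) (π : P ⟶ M) : Prop :=
  IsSES δ π ∧ Projective P ∧ ∀ θ : P ⟶ P, θ ≫ π = π → IsIso θ

/-- `m`-term complexes of projectives: complexes supported in degrees `1,…,m` with
projective components. -/
abbrev termProj (m : ℕ) : CochainComplex C ℤ → Prop :=
  fun X => (∀ i : ℤ, (i < 1 ∨ (m : ℤ) < i) → IsZero (X.X i)) ∧ ∀ i, Projective (X.X i)

/-!
Every extension `0 → T_N[l] → E → T_M[r] → 0` splits in each degree, because `T_M[r]` has
projective components (`Ω_M` is projective since `A` is hereditary). As `r < l`, the complex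
`T_N[l]` vanishes in degree `j` whenever `T_M[r]` is nonzero in degree `j - 1`; there `E → T_M[r]`
is monic, which forces any degreewise section to commute with the differentials. So every
extension receives a morphism from the split one and is Yoneda-equivalent to it.
-/
section YonedaExt

variable {D : Type*} [Category D] [Abelian D] (Pr : D → Prop) {X Z : D}

namespace NExtRep

def split (h : Pr (X ⊞ Z)) : NExtRep Pr 1 Z X :=
  ⟨(ShortComplex.mk (biprod.inl : X ⟶ X ⊞ Z) biprod.snd biprod.inl_snd).toComposableArrows,
    (ShortComplex.Splitting.ofHasBinaryBiproduct X Z).exact.exact_toComposableArrows,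
    inferInstanceAs (Mono (biprod.inl : X ⟶ X ⊞ Z)),
    inferInstanceAs (Epi (biprod.snd : X ⊞ Z ⟶ Z)),
    rfl, rfl, fun i h1 h2 => by obtain rfl : i = 1 := le_antisymm h2 h1; exact h⟩

variable {Pr}

abbrev shortComplex (S : NExtRep Pr 1 Z X) : ShortComplex D :=
  S.1.sc S.2.1.toIsComplex 0

lemma shortExact (S : NExtRep Pr 1 Z X) : S.shortComplex.ShortExact where
  exact := S.2.1.exact 0
  mono_f := S.2.2.1
  epi_g := S.2.2.2.1

lemma nextRel_split (h : Pr (X ⊞ Z)) (S : NExtRep Pr 1 Z X) (σ : S.shortComplex.Splitting) :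
    nextRel Pr 1 Z X (split Pr h) S := by
  obtain ⟨-, -, -, h₀, h₂, -⟩ := S.2
  let φ₁ : X ⊞ Z ⟶ S.1.obj' 1 :=
    biprod.desc (eqToHom h₀.symm ≫ S.shortComplex.f) (eqToHom h₂.symm ≫ σ.s)
  refine ⟨ComposableArrows.homMk₂ (eqToHom h₀.symm) φ₁ (eqToHom h₂.symm) ?_ ?_, rfl, rfl⟩
  · exact biprod.inl_desc _ _
  · change (biprod.snd : X ⊞ Z ⟶ Z) ≫ eqToHom h₂.symm = φ₁ ≫ S.shortComplex.g
    refine biprod.hom_ext' _ _ ?_ ?_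
    · rw [biprod.inl_snd_assoc, zero_comp, biprod.inl_desc_assoc, Category.assoc,
        S.shortComplex.zero, comp_zero]
    · rw [biprod.inr_snd_assoc, biprod.inr_desc_assoc, Category.assoc, σ.s_g, Category.comp_id]

end NExtRep

theorem ExtN.subsingleton_one_of_splitting (h : Pr (X ⊞ Z))
    (hsplit : ∀ S : ShortComplex D, S.ShortExact → S.X₁ = X → S.X₃ = Z → Nonempty S.Splitting) :
    Subsingleton (ExtN Pr 1 Z X) := by
  have hrep (S : NExtRep Pr 1 Z X) :
      Quot.mk _ (NExtRep.split Pr h) = Quot.mk (nextRel Pr 1 Z X) S := by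
    obtain ⟨-, -, -, h₀, h₂, -⟩ := S.2
    obtain ⟨σ⟩ := hsplit _ S.shortExact h₀ h₂
    exact Quot.sound (S.nextRel_split h σ)
  refine ⟨Quot.ind fun S => Quot.ind fun T => ?_⟩
  rw [← hrep S, ← hrep T]

end YonedaExt

namespace CategoryTheory.ShortComplex.ShortExact

variable {ι : Type*} {c : ComplexShape ι} {S : ShortComplex (HomologicalComplex C c)}

lemma nonempty_splitting_of_projective_of_isZero (hS : S.ShortExact)
    (hproj : ∀ i, Projective (S.X₃.X i))
    (hsupp : ∀ i j, c.Rel i j → IsZero (S.X₃.X i) ∨ IsZero (S.X₁.X j)) :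
    Nonempty S.Splitting := by
  have := hS.epi_g
  choose σ hσ using fun i => (hproj i).factors (𝟙 (S.X₃.X i)) (S.g.f i)
  let s : S.X₃ ⟶ S.X₂ :=
    { f := σ
      comm' := fun i j hij => by
        rcases hsupp i j hij with hZ | hX
        · exact hZ.eq_of_src _ _
        · have : Mono (S.g.f j) :=
            ((HomologicalComplex.shortExact_iff_degreewise_shortExact S).1 hS j).exact.mono_g
              (hX.eq_of_src _ _)
          rw [← cancel_mono (S.g.f j), Category.assoc, Category.assoc, ← S.g.comm, hσ,
            reassoc_of% (hσ i), Category.comp_id] }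
  exact ⟨Splitting.ofExactOfSection S hS.exact s (by ext i; exact hσ i) hS.mono_f⟩

end CategoryTheory.ShortComplex.ShortExact

section TwoTerm

variable {Q P : C} (f : Q ⟶ P) (n : ℤ)

lemma twoTerm_X_isZero {i : ℤ} (h₀ : i ≠ n) (h₁ : i ≠ n + 1) : IsZero ((twoTerm f n).X i) := by
  simp only [twoTerm, if_neg h₀, if_neg h₁]
  exact isZero_zero C

lemma twoTerm_X_projective [Projective Q] [Projective P] (i : ℤ) :
    Projective ((twoTerm f n).X i) := by
  dsimp only [twoTerm]
  split_ifs <;> infer_instance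

lemma termProj_twoTerm [Projective Q] [Projective P] {m : ℕ} (h₀ : 1 ≤ n) (h₁ : n + 1 ≤ m) :
    termProj m (twoTerm f n) :=
  ⟨fun _ _ => twoTerm_X_isZero f n (by omega) (by omega), twoTerm_X_projective f n⟩

lemma twoTerm_X_isZero_or_isZero {Q' P' : C} (g : Q' ⟶ P') {k : ℤ} (hkn : k < n) (i : ℤ) :
    IsZero ((twoTerm f n).X i) ∨ IsZero ((twoTerm g k).X (i + 1)) := by
  by_cases hi : i = n ∨ i = n + 1
  · exact .inr (twoTerm_X_isZero g k (by omega) (by omega))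
  · exact .inl (twoTerm_X_isZero f n (by omega) (by omega))

end TwoTerm

lemma termProj_biprod {m : ℕ} {X Y : CochainComplex C ℤ} (hX : termProj m X)
    (hY : termProj m Y) : termProj m (X ⊞ Y) := by
  have := hX.2
  have := hY.2
  refine ⟨fun i hi => ?_, fun i => Projective.of_iso (X.biprodXIso Y i).symm inferInstance⟩
  exact ((biprod_isZero_iff _ _).2 ⟨hX.1 i hi, hY.1 i hi⟩).of_iso (X.biprodXIso Y i)

/-- **In `C^m(P)`, `Ext¹(T_M[r], T_N[l]) = 0` for `0 ≤ r < l < m - 1`.**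
Here `T_M[r]` is the two-term complex `Ω_M → P_M` (a minimal projective resolution of
`M`) placed in degrees `(m-1-r, m-r)`. -/
theorem ext1_shifted_T_vanishes (hC : Hereditary C) [EnoughProjectives C]
    [∀ X Y : C, Finite (X ⟶ Y)] (m : ℕ) (hm : 2 ≤ m)
    {M N Ω Ω' P P' : C} {δ : Ω ⟶ P} {π : P ⟶ M} (hM : IsMinProjRes δ π)
    {δ' : Ω' ⟶ P'} {π' : P' ⟶ N} (hN : IsMinProjRes δ' π')
    (r l : ℕ) (hrl : r < l) (hl : (l : ℤ) < (m : ℤ) - 1) :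
    Subsingleton (ExtN (termProj (C := C) m) 1
      (twoTerm δ ((m : ℤ) - 1 - r)) (twoTerm δ' ((m : ℤ) - 1 - l))) := by
  obtain ⟨⟨_, hδ⟩, hP, -⟩ := hM
  obtain ⟨⟨_, hδ'⟩, hP', -⟩ := hN
  have : Projective Ω := hC Ω P δ hδ.mono_f hP
  have : Projective Ω' := hC Ω' P' δ' hδ'.mono_f hP'
  refine ExtN.subsingleton_one_of_splitting _
    (termProj_biprod (termProj_twoTerm δ' _ (by omega) (by omega))
      (termProj_twoTerm δ _ (by omega) (by omega))) fun S hS h₁ h₃ => ?_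
  refine hS.nonempty_splitting_of_projective_of_isZero (h₃ ▸ twoTerm_X_projective δ _)
    fun i j (hij : i + 1 = j) => ?_
  rw [h₁, h₃, ← hij]
  exact twoTerm_X_isZero_or_isZero δ _ δ' (by omega) i
end
end

section
/- Let E be a finitary exact category of global dimension at most one over F_q. The integration map ∫ : H(E) → T_q(E), [M] ↦ X^{M̂}, is an algebra homomorphism, where T_q(E) is the Z[q^{±1}]-algebra with basis {X^α : α ∈ K(E)} and multiplication X^α * X^β = q^{−⟨α,β⟩} X^{α+β}, with ⟨·,·⟩ the Euler form on K(E). -/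
open CategoryTheory CategoryTheory.Limits
open scoped Classical

noncomputable section

attribute [local instance] CategoryTheory.isIsomorphicSetoid

universe v u

variable {C : Type u} [Category.{v} C] [Abelian C]

variable (P : C → Prop)

open ZeroObject

variable (Pr : C → Prop)

variable (Pr : C → Prop)

/-- The defining relations of the Grothendieck group `K(E)` of the exact subcategory. -/
def grothRelSetP : Set (FreeAbelianGroup (IsoCls (SubCat Pr))) :=
  {x | ∃ (M N L : SubCat Pr) (f : N.obj ⟶ L.obj) (g : L.obj ⟶ M.obj), IsSES f g ∧
    x = FreeAbelianGroup.of ⟦L⟧ - FreeAbelianGroup.of ⟦N⟧ - FreeAbelianGroup.of ⟦M⟧}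

/-- The Grothendieck group `K(E)` of the exact subcategory. -/
abbrev K0P := FreeAbelianGroup (IsoCls (SubCat Pr)) ⧸ AddSubgroup.closure (grothRelSetP Pr)

/-- The class `M̂ ∈ K(E)` of an object. -/
def K0clsP (M : SubCat Pr) : K0P Pr := QuotientAddGroup.mk (FreeAbelianGroup.of ⟦M⟧)

/-- The quantum torus `T_q(E)`: basis `X^α`, `α ∈ K(E)`, with
`X^α * X^β = q^{-⟨α,β⟩} X^{α+β}` for a given Euler form `χ` on `K(E)`. -/
def tMul (q : ℕ) (χ : K0P Pr → K0P Pr → ℤ) (x y : K0P Pr →₀ ℚ) : K0P Pr →₀ ℚ :=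
  x.sum fun α a => y.sum fun β b =>
    (a * b * (q : ℚ) ^ (-(χ α β))) • Finsupp.single (α + β) (1 : ℚ)

/-- The integration map `∫ : H(E) → T_q(E)`, `[M] ↦ X^{M̂}`. -/
def intMap (x : HallAlgP Pr) : K0P Pr →₀ ℚ :=
  x.sum fun κ a => Finsupp.single (QuotientAddGroup.mk (FreeAbelianGroup.of κ)) a

/-! Proof idea: `∫` is `ℚ`-linear, so it suffices to treat basis elements `[M] ⋄ [N]`. Every
middle term `L` occurring in `[M] ⋄ [N]` sits in a short exact sequence `0 → N → L → M → 0`, so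
`L̂ = M̂ + N̂`, and `∫ ([M] ⋄ [N])` is the sum of the Hall coefficients times `X^{M̂ + N̂}`.
Sorting the classes of `Ext¹(M, N)` by the isomorphism class of their middle term shows that these
coefficients add up to `|Ext¹(M, N)| / |Hom(M, N)| = q^{-⟨M, N⟩}`. -/

lemma IsSES.comp_iso {N L L' M : C} {f : N ⟶ L} {g : L ⟶ M} (h : IsSES f g) (e : L ≅ L') :
    IsSES (f ≫ e.hom) (e.inv ≫ g) := by
  obtain ⟨w, hses⟩ := h
  have w' : (f ≫ e.hom) ≫ e.inv ≫ g = 0 := by simp [w]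
  exact ⟨w', ShortComplex.shortExact_of_iso
    (ShortComplex.isoMk (Iso.refl N) e (Iso.refl M) (by simp) (by simp) :
      ShortComplex.mk f g w ≅ ShortComplex.mk _ _ w') hses⟩

section

variable {Pr}

lemma K0clsP_eq_add_of_isSES {M N L : SubCat Pr}
    (f : N.obj ⟶ L.obj) (g : L.obj ⟶ M.obj) (h : IsSES f g) :
    K0clsP Pr L = K0clsP Pr M + K0clsP Pr N := by
  have hrel : FreeAbelianGroup.of ⟦L⟧ - FreeAbelianGroup.of ⟦N⟧ - FreeAbelianGroup.of ⟦M⟧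
      ∈ AddSubgroup.closure (grothRelSetP Pr) :=
    AddSubgroup.subset_closure ⟨M, N, L, f, g, h, rfl⟩
  rw [K0clsP, K0clsP, K0clsP, ← QuotientAddGroup.mk_add, QuotientAddGroup.eq]
  convert (AddSubgroup.closure (grothRelSetP Pr)).neg_mem hrel using 1
  abel

namespace NExtRep

variable {M N : C}

def mid (T : NExtRep Pr 1 M N) : C := T.1.obj ⟨1, by omega⟩

lemma obj_zero (T : NExtRep Pr 1 M N) : T.1.obj ⟨0, by omega⟩ = N := T.2.2.2.2.1

lemma obj_two (T : NExtRep Pr 1 M N) : T.1.obj ⟨2, by omega⟩ = M := T.2.2.2.2.2.1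

def incl (T : NExtRep Pr 1 M N) : N ⟶ T.mid :=
  eqToHom T.obj_zero.symm ≫ T.1.map' 0 1

def proj (T : NExtRep Pr 1 M N) : T.mid ⟶ M :=
  T.1.map' 1 2 ≫ eqToHom T.obj_two

lemma isSES_incl_proj (T : NExtRep Pr 1 M N) : IsSES T.incl T.proj := by
  obtain ⟨hex, hmono, hepi, -⟩ := T.2
  have w₀ : T.1.map' 0 1 ≫ T.1.map' 1 2 = 0 := hex.toIsComplex.zero 0
  have hses₀ : (ShortComplex.mk _ _ w₀).ShortExact :=
    ShortComplex.ShortExact.mk' (hex.exact 0) hmono hepi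
  have w : T.incl ≫ T.proj = 0 := by
    erw [incl, proj, Category.assoc, reassoc_of% w₀, zero_comp, comp_zero]
  refine ⟨w, ShortComplex.shortExact_of_iso
    (ShortComplex.isoMk (eqToIso T.obj_zero) (Iso.refl _) (eqToIso T.obj_two) ?_ ?_ :
      ShortComplex.mk _ _ w₀ ≅ ShortComplex.mk T.incl T.proj w) hses₀⟩
  · simp [incl, mid]
  · simp [proj, mid]

/-- Equivalence of extensions in the sense of `extRel`, allowing different middle terms. -/
def IsoRel (S T : NExtRep Pr 1 M N) : Prop :=
  ∃ e : S.mid ≅ T.mid, S.incl ≫ e.hom = T.incl ∧ e.hom ≫ T.proj = S.proj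

lemma isoRel_equivalence : Equivalence (IsoRel (Pr := Pr) (M := M) (N := N)) where
  refl _ := ⟨Iso.refl _, by simp, by simp⟩
  symm := fun ⟨e, h₁, h₂⟩ => ⟨e.symm, by simp [← h₁], by simp [← h₂]⟩
  trans := fun ⟨e, h₁, h₂⟩ ⟨e', h₁', h₂'⟩ =>
    ⟨e ≪≫ e', by rw [Iso.trans_hom, ← Category.assoc, h₁, h₁'],
      by rw [Iso.trans_hom, Category.assoc, h₂', h₂]⟩

-- By the five lemma, the middle component of such a morphism is an isomorphism.
lemma isoRel_of_nextRel {S T : NExtRep Pr 1 M N} (h : nextRel Pr 1 M N S T) : IsoRel S T := by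
  obtain ⟨φ, h₀, h₂⟩ := h
  obtain ⟨wS, hsesS⟩ := S.isSES_incl_proj
  obtain ⟨wT, hsesT⟩ := T.isSES_incl_proj
  have h₀' : ComposableArrows.app' φ 0 = eqToHom (S.obj_zero.trans T.obj_zero.symm) := h₀
  have h₂' : ComposableArrows.app' φ 2 = eqToHom (S.obj_two.trans T.obj_two.symm) := h₂
  have comm₁₂ : 𝟙 N ≫ T.incl = S.incl ≫ ComposableArrows.app' φ 1 := by
    erw [Category.id_comp, incl, incl, Category.assoc, ComposableArrows.naturality' φ 0 1, h₀',
      eqToHom_trans_assoc]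
    rfl
  have comm₂₃ : ComposableArrows.app' φ 1 ≫ T.proj = S.proj ≫ 𝟙 M := by
    erw [Category.comp_id, proj, proj, ← Category.assoc, ← ComposableArrows.naturality' φ 1 2, h₂',
      Category.assoc, eqToHom_trans]
    rfl
  let Φ : ShortComplex.mk S.incl S.proj wS ⟶ ShortComplex.mk T.incl T.proj wT :=
    { τ₁ := 𝟙 N, τ₂ := ComposableArrows.app' φ 1, τ₃ := 𝟙 M, comm₁₂ := comm₁₂, comm₂₃ := comm₂₃ }
  have hiso : IsIso Φ.τ₂ :=
    ShortComplex.isIso₂_of_shortExact_of_isIso₁₃' Φ hsesS hsesT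
      (by dsimp [Φ]; infer_instance) (by dsimp [Φ]; infer_instance)
  exact ⟨asIso Φ.τ₂, comm₁₂.symm.trans (Category.id_comp _), comm₂₃.trans (Category.comp_id _)⟩

lemma isoRel_of_eqvGen {S T : NExtRep Pr 1 M N}
    (h : Relation.EqvGen (nextRel Pr 1 M N) S T) : IsoRel S T :=
  isoRel_equivalence.eqvGen_iff.mp (h.mono fun _ _ => isoRel_of_nextRel)

def ofExtW {L : C} (hL : Pr L) (p : ExtW M N L) : NExtRep Pr 1 M N :=
  ⟨ComposableArrows.mk₂ p.1.1 p.1.2,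
    ComposableArrows.exact₂_mk _ p.2.choose p.2.choose_spec.exact,
    p.2.choose_spec.mono_f, p.2.choose_spec.epi_g, rfl, rfl,
    fun i h₁ h₂ => by obtain rfl : i = 1 := le_antisymm h₂ h₁; exact hL⟩

lemma incl_ofExtW {L : C} (hL : Pr L) (p : ExtW M N L) : (ofExtW hL p).incl = p.1.1 := by
  erw [incl, eqToHom_refl, Category.id_comp]
  rfl

lemma proj_ofExtW {L : C} (hL : Pr L) (p : ExtW M N L) : (ofExtW hL p).proj = p.1.2 := by
  erw [proj, eqToHom_refl, Category.comp_id]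
  rfl

lemma nextRel_ofExtW {L : C} (hL : Pr L) {p p' : ExtW M N L} (h : extRel M N L p p') :
    nextRel Pr 1 M N (ofExtW hL p) (ofExtW hL p') := by
  obtain ⟨θ, h₁, h₂⟩ := h
  refine ⟨ComposableArrows.homMk₂ (𝟙 N) θ.hom (𝟙 M) ?_ ?_, rfl, rfl⟩
  · change p.1.1 ≫ θ.hom = 𝟙 N ≫ p'.1.1
    rw [Category.id_comp, h₁]
  · change p.1.2 ≫ 𝟙 M = θ.hom ≫ p'.1.2
    rw [Category.comp_id, h₂]

def midObj (T : NExtRep Pr 1 M N) : SubCat Pr := ⟨T.mid, T.2.2.2.2.2.2 1 le_rfl le_rfl⟩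

end NExtRep

section ExtOne

variable {M N : C}

def midCls : ExtN Pr 1 M N → IsoCls (SubCat Pr) :=
  Quot.lift (fun T => ⟦T.midObj⟧) fun _ _ h => by
    obtain ⟨e, -, -⟩ := NExtRep.isoRel_of_nextRel h
    exact Quotient.sound ⟨ObjectProperty.isoMk _ e⟩

def extClassesToFiber (L : SubCat Pr) :
    ExtClasses M N L.obj → {t : ExtN Pr 1 M N // midCls t = ⟦L⟧} :=
  Quot.lift (fun p => ⟨Quot.mk _ (NExtRep.ofExtW L.2 p), rfl⟩)
    fun _ _ h => Subtype.ext (Quot.sound (NExtRep.nextRel_ofExtW _ h))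

lemma extClassesToFiber_injective (L : SubCat Pr) :
    Function.Injective (extClassesToFiber (M := M) (N := N) L) := by
  rintro ⟨p⟩ ⟨p'⟩ h
  obtain ⟨e, h₁, h₂⟩ := NExtRep.isoRel_of_eqvGen (Quot.eqvGen_exact (congrArg Subtype.val h))
  rw [NExtRep.incl_ofExtW, NExtRep.incl_ofExtW] at h₁
  rw [NExtRep.proj_ofExtW, NExtRep.proj_ofExtW] at h₂
  exact Quot.sound ⟨e, h₁, h₂⟩

lemma extClassesToFiber_surjective (L : SubCat Pr) :
    Function.Surjective (extClassesToFiber (M := M) (N := N) L) := by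
  rintro ⟨⟨T⟩, hT⟩
  obtain ⟨eL⟩ : T.midObj ≈ L := Quotient.exact hT
  let e : T.mid ≅ L.obj := (ObjectProperty.ι Pr).mapIso eL
  refine ⟨Quot.mk _ ⟨(T.incl ≫ e.hom, e.inv ≫ T.proj), T.isSES_incl_proj.comp_iso e⟩,
    Subtype.ext (Quot.sound ?_)⟩
  refine ⟨ComposableArrows.homMk₂ (eqToHom T.obj_zero.symm) e.inv (eqToHom T.obj_two.symm)
    ?_ ?_, rfl, rfl⟩
  · change (T.incl ≫ e.hom) ≫ e.inv = eqToHom T.obj_zero.symm ≫ T.1.map' 0 1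
    erw [Category.assoc, Iso.hom_inv_id, Category.comp_id, NExtRep.incl]
    rfl
  · change (e.inv ≫ T.proj) ≫ eqToHom T.obj_two.symm = e.inv ≫ T.1.map' 1 2
    erw [NExtRep.proj, Category.assoc, Category.assoc, eqToHom_trans, eqToHom_refl,
      Category.comp_id]

lemma card_extClasses (L : SubCat Pr) :
    Nat.card (ExtClasses M N L.obj) = Nat.card {t : ExtN Pr 1 M N // midCls t = ⟦L⟧} :=
  Nat.card_eq_of_bijective _ ⟨extClassesToFiber_injective L, extClassesToFiber_surjective L⟩

end ExtOne

section HallProduct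

variable [HallFinitaryP Pr] (M N : SubCat Pr)

lemma hallMulBasisP_apply (κ : IsoCls (SubCat Pr)) :
    hallMulBasisP Pr M N κ =
      Nat.card {t : ExtN Pr 1 M.obj N.obj // midCls t = κ} / Nat.card (M.obj ⟶ N.obj) := by
  change hallCoeff M.obj N.obj κ.out.obj = _
  rw [hallCoeff, card_extClasses, Quotient.out_eq]

lemma mk_of_mem_support_hallMulBasisP {κ : IsoCls (SubCat Pr)}
    (hκ : κ ∈ (hallMulBasisP Pr M N).support) :
    (QuotientAddGroup.mk (FreeAbelianGroup.of κ) : K0P Pr) = K0clsP Pr M + K0clsP Pr N := by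
  have hcoeff : hallCoeffP Pr M N κ.out ≠ 0 := Finsupp.mem_support_iff.mp hκ
  obtain ⟨⟨p⟩⟩ : Nonempty (ExtClasses M.obj N.obj κ.out.obj) :=
    (Nat.card_ne_zero.mp (Nat.cast_ne_zero.mp (left_ne_zero_of_mul hcoeff))).1
  rw [← K0clsP_eq_add_of_isSES p.1.1 p.1.2 p.2, K0clsP, Quotient.out_eq]

lemma sum_hallMulBasisP [Finite (ExtN Pr 1 M.obj N.obj)] :
    ∑ κ ∈ (hallMulBasisP Pr M N).support, hallMulBasisP Pr M N κ =
      Nat.card (ExtN Pr 1 M.obj N.obj) / Nat.card (M.obj ⟶ N.obj) := by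
  have := Fintype.ofFinite (ExtN Pr 1 M.obj N.obj)
  have : Finite (M.obj ⟶ N.obj) := HallFinitaryP.homFinite M N
  have hHom : (Nat.card (M.obj ⟶ N.obj) : ℚ) ≠ 0 := by
    exact_mod_cast (Nat.card_pos (α := M.obj ⟶ N.obj)).ne'
  have hmem (t : ExtN Pr 1 M.obj N.obj) : midCls t ∈ (hallMulBasisP Pr M N).support := by
    rw [Finsupp.mem_support_iff, hallMulBasisP_apply]
    have hfiber : Nat.card {t' // midCls t' = midCls t} ≠ 0 :=
      Nat.card_ne_zero.mpr ⟨⟨⟨t, rfl⟩⟩, inferInstance⟩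
    exact div_ne_zero (Nat.cast_ne_zero.mpr hfiber) hHom
  simp only [hallMulBasisP_apply, ← Finset.sum_div, Nat.card_eq_fintype_card,
    Fintype.card_subtype]
  rw [← Finset.card_univ, Finset.card_eq_sum_card_fiberwise fun t _ => hmem t]
  norm_cast

lemma intMap_hallMulBasisP [Finite (ExtN Pr 1 M.obj N.obj)] :
    intMap Pr (hallMulBasisP Pr M N) =
      (Nat.card (ExtN Pr 1 M.obj N.obj) / Nat.card (M.obj ⟶ N.obj) : ℚ) •
        Finsupp.single (K0clsP Pr M + K0clsP Pr N) 1 := by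
  rw [Finsupp.smul_single, smul_eq_mul, mul_one, ← sum_hallMulBasisP, intMap, Finsupp.sum,
    Finset.sum_congr rfl fun κ hκ => by rw [mk_of_mem_support_hallMulBasisP M N hκ],
    Finsupp.single_finsetSum]

end HallProduct

end

lemma intMap_eq_mapDomain (x : HallAlgP Pr) :
    intMap Pr x = Finsupp.mapDomain (fun κ => QuotientAddGroup.mk (FreeAbelianGroup.of κ)) x :=
  rfl

lemma intMap_hallMulP [HallFinitaryP Pr] (x y : HallAlgP Pr) :
    intMap Pr (hallMulP Pr x y) = x.sum fun κ a => y.sum fun κ' b =>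
      (a * b) • intMap Pr (hallMulBasisP Pr κ.out κ'.out) := by
  simp only [hallMulP, intMap_eq_mapDomain, ← Finsupp.lmapDomain_apply ℚ ℚ, map_finsuppSum,
    map_smul]

lemma tMul_mapDomain (q : ℕ) (χ : K0P Pr → K0P Pr → ℤ) {ι : Type*}
    (c : ι → K0P Pr) (x y : ι →₀ ℚ) :
    tMul Pr q χ (x.mapDomain c) (y.mapDomain c) = x.sum fun i a => y.sum fun j b =>
      (a * b * (q : ℚ) ^ (-(χ (c i) (c j)))) • Finsupp.single (c i + c j) 1 := by
  rw [tMul, Finsupp.sum_mapDomain_index (by simp [Finsupp.sum])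
    (by simp [add_mul, add_smul, Finsupp.sum_add])]
  refine Finsupp.sum_congr fun i _ => ?_
  rw [Finsupp.sum_mapDomain_index (by simp) (by simp [mul_add, add_mul, add_smul])]

theorem intMap_algHom (q : ℕ) (hq : 1 < q) [HallFinitaryP Pr]
    (hhom : ∀ M N : SubCat Pr, ∃ d : ℕ, Nat.card (M.obj ⟶ N.obj) = q ^ d)
    (hext : ∀ M N : SubCat Pr, ∃ d : ℕ, Nat.card (ExtN Pr 1 M.obj N.obj) = q ^ d)
    (χ : K0P Pr → K0P Pr → ℤ)
    (hχ : ∀ M N : SubCat Pr, χ (K0clsP Pr M) (K0clsP Pr N) =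
      (Nat.log q (Nat.card (M.obj ⟶ N.obj)) : ℤ) -
        (Nat.log q (Nat.card (ExtN Pr 1 M.obj N.obj)) : ℤ)) :
    ∀ x y : HallAlgP Pr,
      intMap Pr (hallMulP Pr x y) = tMul Pr q χ (intMap Pr x) (intMap Pr y) := by
  have hbasis (M N : SubCat Pr) : intMap Pr (hallMulBasisP Pr M N) =
      (q : ℚ) ^ (-χ (K0clsP Pr M) (K0clsP Pr N)) •
        Finsupp.single (K0clsP Pr M + K0clsP Pr N) 1 := by
    obtain ⟨d₀, hd₀⟩ := hhom M N
    obtain ⟨d₁, hd₁⟩ := hext M N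
    have : Finite (ExtN Pr 1 M.obj N.obj) :=
      Nat.finite_of_card_ne_zero (by rw [hd₁]; positivity)
    rw [intMap_hallMulBasisP, hχ, hd₀, hd₁, Nat.log_pow hq, Nat.log_pow hq, neg_sub,
      zpow_sub₀ (by positivity)]
    norm_cast
  intro x y
  rw [intMap_hallMulP, intMap_eq_mapDomain Pr x, intMap_eq_mapDomain Pr y, tMul_mapDomain]
  refine Finsupp.sum_congr fun κ _ => Finsupp.sum_congr fun κ' _ => ?_
  rw [hbasis, smul_smul, K0clsP, K0clsP, Quotient.out_eq, Quotient.out_eq]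

end
end
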